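/- arXiv:2208.08026 — 3 statements merged into one kernel-verified Lean document; each statement's English description precedes it below -/
import Mathlib

section
/- Let u : ℝ × ℝ → ℝ be smooth with g(t,x,u,u_t) = a u_t + f(t,u) for a constant a and f continuous in u with antiderivative F in u (∂_u F(t,u) = f(t,u)). Then the divergence identity e^{at} u_x (u_tt − c² u_xx + a u_t + f(t,u)) = ∂_t(e^{at} u_t u_x) + ∂_x( e^{at} F(t,u) − ½ e^{at}(u_t² + c² u_x²) ) holds pointwise. -/
open Real MeasureTheory

/-- Partial derivative in the first (time) variable. -/
noncomputable def pt (u : ℝ → ℝ → ℝ) : ℝ → ℝ → ℝ := fun t x => deriv (fun s => u s x) t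
/-- Partial derivative in the second (space) variable. -/
noncomputable def px (u : ℝ → ℝ → ℝ) : ℝ → ℝ → ℝ := fun t x => deriv (fun y => u t y) x

private lemma slice_t {g : ℝ × ℝ → ℝ} (hg : Differentiable ℝ g) (t x : ℝ) :
    HasDerivAt (fun s => g (s, x)) (fderiv ℝ g (t, x) (1, 0)) t := by
  have h1 : HasDerivAt (fun s : ℝ => (s, x)) ((1 : ℝ), (0 : ℝ)) t :=
    (hasDerivAt_id t).prodMk (hasDerivAt_const t x)
  exact (hg (t, x)).hasFDerivAt.comp_hasDerivAt t h1

private lemma slice_x {g : ℝ × ℝ → ℝ} (hg : Differentiable ℝ g) (t x : ℝ) :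
    HasDerivAt (fun y => g (t, y)) (fderiv ℝ g (t, x) (0, 1)) x := by
  have h1 : HasDerivAt (fun y : ℝ => (t, y)) ((0 : ℝ), (1 : ℝ)) x :=
    (hasDerivAt_const x t).prodMk (hasDerivAt_id x)
  exact (hg (t, x)).hasFDerivAt.comp_hasDerivAt x h1

theorem multiplier_identity_case_i
    (u : ℝ → ℝ → ℝ) (a c : ℝ) (f F : ℝ → ℝ → ℝ)
    (hu : ContDiff ℝ (⊤ : ℕ∞) (fun p : ℝ × ℝ => u p.1 p.2))
    (hf : Continuous (fun p : ℝ × ℝ => f p.1 p.2))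
    (hF : ∀ t w, HasDerivAt (fun w' => F t w') (f t w) w) :
    ∀ t x : ℝ,
      Real.exp (a * t) * px u t x *
        (pt (pt u) t x - c ^ 2 * px (px u) t x + a * pt u t x + f t (u t x))
      = deriv (fun s => Real.exp (a * s) * pt u s x * px u s x) t
        + deriv (fun y => Real.exp (a * t) * F t (u t y)
            - (1 / 2) * Real.exp (a * t) * ((pt u t y) ^ 2 + c ^ 2 * (px u t y) ^ 2)) x := by
  intro t x
  set U : ℝ × ℝ → ℝ := fun p => u p.1 p.2 with hUdef
  have hU : Differentiable ℝ U := hu.differentiable (by simp)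
  set Pt : ℝ × ℝ → ℝ := fun p => fderiv ℝ U p (1, 0) with hPtdef
  set Px : ℝ × ℝ → ℝ := fun p => fderiv ℝ U p (0, 1) with hPxdef
  have hfd : ContDiff ℝ (⊤ : ℕ∞) (fderiv ℝ U) := hu.fderiv_right (by simp)
  have hPt : ContDiff ℝ (⊤ : ℕ∞) Pt := hfd.clm_apply contDiff_const
  have hPx : ContDiff ℝ (⊤ : ℕ∞) Px := hfd.clm_apply contDiff_const
  have hPtd : Differentiable ℝ Pt := hPt.differentiable (by simp)
  have hPxd : Differentiable ℝ Px := hPx.differentiable (by simp)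
  -- identify first partials
  have ept : ∀ s y, pt u s y = Pt (s, y) := fun s y => (slice_t hU s y).deriv
  have epx : ∀ s y, px u s y = Px (s, y) := fun s y => (slice_x hU s y).deriv
  -- second partials
  have eptt : pt (pt u) t x = fderiv ℝ Pt (t, x) (1, 0) := by
    have : (fun s => pt u s x) = fun s => Pt (s, x) := funext fun s => ept s x
    rw [pt, this]; exact (slice_t hPtd t x).deriv
  have epxx : px (px u) t x = fderiv ℝ Px (t, x) (0, 1) := by
    have : (fun y => px u t y) = fun y => Px (t, y) := funext fun y => epx t y
    rw [px, this]; exact (slice_x hPxd t x).deriv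
  -- symmetry of mixed second derivatives
  have hsnd : HasFDerivAt (fderiv ℝ U) (fderiv ℝ (fderiv ℝ U) (t, x)) (t, x) :=
    ((hfd.differentiable (by simp)) (t, x)).hasFDerivAt
  have hfderivPt : ∀ v : ℝ × ℝ,
      fderiv ℝ Pt (t, x) v = fderiv ℝ (fderiv ℝ U) (t, x) v (1, 0) := by
    intro v
    have h := fderiv_clm_apply (c := fderiv ℝ U)
      (u := fun _ : ℝ × ℝ => ((1 : ℝ), (0 : ℝ)))
      ((hfd.differentiable (by simp)) (t, x)) (differentiableAt_const _)
    have : fderiv ℝ Pt (t, x) =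
        (fderiv ℝ U (t, x)).comp (fderiv ℝ (fun _ : ℝ × ℝ => ((1 : ℝ), (0 : ℝ))) (t, x))
          + (fderiv ℝ (fderiv ℝ U) (t, x)).flip (1, 0) := h
    rw [this]; simp
  have hfderivPx : ∀ v : ℝ × ℝ,
      fderiv ℝ Px (t, x) v = fderiv ℝ (fderiv ℝ U) (t, x) v (0, 1) := by
    intro v
    have h := fderiv_clm_apply (c := fderiv ℝ U)
      (u := fun _ : ℝ × ℝ => ((0 : ℝ), (1 : ℝ)))
      ((hfd.differentiable (by simp)) (t, x)) (differentiableAt_const _)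
    have : fderiv ℝ Px (t, x) =
        (fderiv ℝ U (t, x)).comp (fderiv ℝ (fun _ : ℝ × ℝ => ((0 : ℝ), (1 : ℝ))) (t, x))
          + (fderiv ℝ (fderiv ℝ U) (t, x)).flip (0, 1) := h
    rw [this]; simp
  have hsym : fderiv ℝ Px (t, x) (1, 0) = fderiv ℝ Pt (t, x) (0, 1) := by
    rw [hfderivPx, hfderivPt]
    exact second_derivative_symmetric (fun y => (hU y).hasFDerivAt) hsnd _ _
  -- time derivative of the flux
  have hT : HasDerivAt (fun s => Real.exp (a * s) * pt u s x * px u s x)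
      ((Real.exp (a * t) * a * Pt (t, x) + Real.exp (a * t) * fderiv ℝ Pt (t, x) (1, 0))
          * Px (t, x)
        + Real.exp (a * t) * Pt (t, x) * fderiv ℝ Px (t, x) (1, 0)) t := by
    have h1 : HasDerivAt (fun s => Real.exp (a * s)) (Real.exp (a * t) * a) t := by
      simpa using ((hasDerivAt_id t).const_mul a).exp
    have h2 := (h1.fun_mul (slice_t hPtd t x)).fun_mul (slice_t hPxd t x)
    have : (fun s => Real.exp (a * s) * pt u s x * px u s x)
        = fun s => Real.exp (a * s) * Pt (s, x) * Px (s, x) := by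
      funext s; rw [ept, epx]
    rw [this]
    convert h2 using 1
  -- space derivative of the flux
  have hX : HasDerivAt (fun y => Real.exp (a * t) * F t (u t y)
        - (1 / 2) * Real.exp (a * t) * ((pt u t y) ^ 2 + c ^ 2 * (px u t y) ^ 2))
      (Real.exp (a * t) * (f t (u t x) * Px (t, x))
        - (1 / 2) * Real.exp (a * t)
          * (2 * Pt (t, x) * fderiv ℝ Pt (t, x) (0, 1)
            + c ^ 2 * (2 * Px (t, x) * fderiv ℝ Px (t, x) (0, 1)))) x := by
    have hux : HasDerivAt (fun y => u t y) (Px (t, x)) x := slice_x hU t x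
    have hFc : HasDerivAt (fun y => F t (u t y)) (f t (u t x) * Px (t, x)) x :=
      (hF t (u t x)).comp x hux
    have hpt2 : HasDerivAt (fun y => (Pt (t, y)) ^ 2)
        (2 * Pt (t, x) * fderiv ℝ Pt (t, x) (0, 1)) x := by
      have := (slice_x hPtd t x).fun_pow 2
      exact this.congr_deriv (by norm_num)
    have hpx2 : HasDerivAt (fun y => (Px (t, y)) ^ 2)
        (2 * Px (t, x) * fderiv ℝ Px (t, x) (0, 1)) x := by
      have := (slice_x hPxd t x).fun_pow 2
      exact this.congr_deriv (by norm_num)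
    have h := (hFc.const_mul (Real.exp (a * t))).fun_sub
      ((hpt2.fun_add (hpx2.const_mul (c ^ 2))).const_mul ((1 / 2) * Real.exp (a * t)))
    have heq : (fun y => Real.exp (a * t) * F t (u t y)
        - (1 / 2) * Real.exp (a * t) * ((pt u t y) ^ 2 + c ^ 2 * (px u t y) ^ 2))
        = fun y => Real.exp (a * t) * F t (u t y)
          - (1 / 2) * Real.exp (a * t) * ((Pt (t, y)) ^ 2 + c ^ 2 * (Px (t, y)) ^ 2) := by
      funext y; rw [ept, epx]
    rw [heq]
    convert h using 1
  rw [hT.deriv, hX.deriv, ept, epx, eptt, epxx, hsym]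
  ring
end

section
/- Let u : ℝ × ℝ → ℝ be smooth and let a, b, c ∈ ℝ with α = a + cb. If u satisfies u_tt + α u_t + (α/2)² u + e^{−(α/2 − 2cb)t} h(e^{(α/2)t} u) = c² u_xx, then v = e^{(α/2)t} u satisfies v_tt − c² v_xx + e^{2cbt} h(v) = 0. -/
open Real MeasureTheory
open scoped ContDiff

theorem damped_to_exponentially_modulated_undamped
    (u v : ℝ → ℝ → ℝ) (a b c : ℝ) (h : ℝ → ℝ)
    (hu : ContDiff ℝ (⊤ : ℕ∞) (fun p : ℝ × ℝ => u p.1 p.2))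
    (α : ℝ) (hαdef : α = a + c * b)
    (hv : ∀ t x, v t x = Real.exp ((α / 2) * t) * u t x)
    (heq : ∀ t x,
      pt (pt u) t x + α * pt u t x + (α / 2) ^ 2 * u t x
        + Real.exp (-(α / 2 - 2 * c * b) * t) * h (Real.exp ((α / 2) * t) * u t x)
      = c ^ 2 * px (px u) t x) :
    ∀ t x, pt (pt v) t x - c ^ 2 * px (px v) t x
      + Real.exp (2 * c * b * t) * h (v t x) = 0 := by
  intro t x
  set k : ℝ := α / 2 with hk
  -- smoothness of slices
  have hut : ∀ y, ContDiff ℝ (⊤ : ℕ∞) (fun s => u s y) := fun y =>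
    hu.comp (contDiff_id.prodMk contDiff_const)
  have hux : ∀ s, ContDiff ℝ (⊤ : ℕ∞) (fun y => u s y) := fun s =>
    hu.comp (contDiff_const.prodMk contDiff_id)
  -- exponential derivative
  have he : ∀ s : ℝ, HasDerivAt (fun s' : ℝ => Real.exp (k * s')) (Real.exp (k * s) * k) s :=
    fun s => by simpa using ((hasDerivAt_id s).const_mul k).exp
  have hud : ∀ s y, HasDerivAt (fun s' => u s' y) (pt u s y) s := fun s y =>
    (((hut y).differentiable (by simp)) s).hasDerivAt
  -- first time derivative of v
  have hptv : ∀ s y, pt v s y = k * Real.exp (k * s) * u s y + Real.exp (k * s) * pt u s y := by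
    intro s y
    have hveq : (fun s' => v s' y) = fun s' => Real.exp (k * s') * u s' y :=
      funext fun s' => hv s' y
    have : deriv (fun s' => Real.exp (k * s') * u s' y) s = Real.exp (k * s) * k * u s y + Real.exp (k * s) * pt u s y := ((he s).mul (hud s y)).deriv
    simp only [pt, hveq, this]
    ring
  -- second time derivative
  have hptud : ∀ y, HasDerivAt (fun s => pt u s y) (pt (pt u) t y) t := by
    intro y
    have h1 : ContDiff ℝ ∞ (deriv (fun s => u s y)) :=
      (contDiff_infty_iff_deriv.mp ((hut y).of_le (by simp))).2
    have h2 : (fun s => pt u s y) = deriv (fun s => u s y) := rfl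
    rw [h2]
    exact ((h1.differentiable (by norm_num)) t).hasDerivAt
  have hpttv : pt (pt v) t x
      = k * (Real.exp (k * t) * k * u t x + Real.exp (k * t) * pt u t x)
        + (Real.exp (k * t) * k * pt u t x + Real.exp (k * t) * pt (pt u) t x) := by
    have hveq : (fun s => pt v s x)
        = fun s => k * (Real.exp (k * s) * u s x) + Real.exp (k * s) * pt u s x := by
      funext s; rw [hptv s x]; ring
    have hd1 : HasDerivAt (fun s => k * (Real.exp (k * s) * u s x))
        (k * (Real.exp (k * t) * k * u t x + Real.exp (k * t) * pt u t x)) t :=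
      (((he t).mul (hud t x))).const_mul k
    have hd2 : HasDerivAt (fun s => Real.exp (k * s) * pt u s x)
        (Real.exp (k * t) * k * pt u t x + Real.exp (k * t) * pt (pt u) t x) t :=
      (he t).mul (hptud x)
    have := (hd1.add hd2).deriv
    rw [show pt (pt v) t x = deriv (fun s => pt v s x) t from rfl, hveq]
    exact this
  -- space derivatives
  have hpxv : ∀ s y, px v s y = Real.exp (k * s) * px u s y := by
    intro s y
    have hveq : (fun y' => v s y') = fun y' => Real.exp (k * s) * u s y' :=
      funext fun y' => hv s y'
    rw [show px v s y = deriv (fun y' => v s y') y from rfl, hveq,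
      deriv_const_mul _ (((hux s).differentiable (by simp)) y)]
    rfl
  have hpxxv : px (px v) t x = Real.exp (k * t) * px (px u) t x := by
    have hveq : (fun y => px v t y) = fun y => Real.exp (k * t) * px u t y :=
      funext fun y => hpxv t y
    have h1 : Differentiable ℝ (fun y => px u t y) := by
      have h2 : (fun y => px u t y) = deriv (fun y => u t y) := rfl
      rw [h2]
      exact (contDiff_infty_iff_deriv.mp ((hux t).of_le (by simp))).2.differentiable (by norm_num)
    rw [show px (px v) t x = deriv (fun y => px v t y) x from rfl, hveq,
      deriv_const_mul _ (h1 x)]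
    rfl
  -- combine
  have key := heq t x
  rw [hpttv, hpxxv, hv t x]
  have hexp : Real.exp (2 * c * b * t)
      = Real.exp (k * t) * Real.exp (-(k - 2 * c * b) * t) := by
    rw [← Real.exp_add]; congr 1; ring
  rw [hexp]
  have hα : α = 2 * k := by rw [hk]; ring
  rw [hα] at key
  linear_combination Real.exp (k * t) * key
end

section
/- Let v : ℝ × ℝ → ℝ be smooth, c ∈ ℝ, α, κ : ℝ × ℝ → ℝ smooth, and suppose κ satisfies κ_t − c κ_x − 2ακ − ∂_t(α_t − α²) + c ∂_x(cα_x + α²) = 0. If v solves v_tt − c² v_xx + α(v_t + c v_x) + κ v = 0, then T = ½(v_t − c v_x)² + α v_t v + ½(α² − α_t + κ)v² and Ψ = (c/2)(v_t − c v_x)² − c² α v_x v + (c/2)(α² + c α_x − κ)v² satisfy ∂_t T + ∂_x Ψ = 0 pointwise. -/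
open Real MeasureTheory

section helpers

variable (u : ℝ → ℝ → ℝ)

lemma hasDerivAt_fst' (hu : ContDiff ℝ (⊤ : ℕ∞) (fun p : ℝ × ℝ => u p.1 p.2)) (t x : ℝ) :
    HasDerivAt (fun s => u s x) (fderiv ℝ (fun p : ℝ × ℝ => u p.1 p.2) (t, x) (1, 0)) t :=
  ((hu.differentiable (by simp) (t, x)).hasFDerivAt).comp_hasDerivAt (f := fun s : ℝ => (s, x)) t
    (HasDerivAt.prodMk (hasDerivAt_id t) (hasDerivAt_const t x))

lemma hasDerivAt_snd' (hu : ContDiff ℝ (⊤ : ℕ∞) (fun p : ℝ × ℝ => u p.1 p.2)) (t x : ℝ) :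
    HasDerivAt (fun y => u t y) (fderiv ℝ (fun p : ℝ × ℝ => u p.1 p.2) (t, x) (0, 1)) x :=
  ((hu.differentiable (by simp) (t, x)).hasFDerivAt).comp_hasDerivAt (f := fun y : ℝ => (t, y)) x
    (HasDerivAt.prodMk (hasDerivAt_const x t) (hasDerivAt_id x))

lemma pt_eq (hu : ContDiff ℝ (⊤ : ℕ∞) (fun p : ℝ × ℝ => u p.1 p.2)) (t x : ℝ) :
    pt u t x = fderiv ℝ (fun p : ℝ × ℝ => u p.1 p.2) (t, x) (1, 0) :=
  (hasDerivAt_fst' u hu t x).deriv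

lemma px_eq (hu : ContDiff ℝ (⊤ : ℕ∞) (fun p : ℝ × ℝ => u p.1 p.2)) (t x : ℝ) :
    px u t x = fderiv ℝ (fun p : ℝ × ℝ => u p.1 p.2) (t, x) (0, 1) :=
  (hasDerivAt_snd' u hu t x).deriv

lemma hasDerivAt_pt (hu : ContDiff ℝ (⊤ : ℕ∞) (fun p : ℝ × ℝ => u p.1 p.2)) (t x : ℝ) :
    HasDerivAt (fun s => u s x) (pt u t x) t := by
  rw [pt_eq u hu t x]; exact hasDerivAt_fst' u hu t x

lemma hasDerivAt_px (hu : ContDiff ℝ (⊤ : ℕ∞) (fun p : ℝ × ℝ => u p.1 p.2)) (t x : ℝ) :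
    HasDerivAt (fun y => u t y) (px u t x) x := by
  rw [px_eq u hu t x]; exact hasDerivAt_snd' u hu t x

lemma contDiff_pt (hu : ContDiff ℝ (⊤ : ℕ∞) (fun p : ℝ × ℝ => u p.1 p.2)) :
    ContDiff ℝ (⊤ : ℕ∞) (fun p : ℝ × ℝ => pt u p.1 p.2) := by
  have h : (fun p : ℝ × ℝ => pt u p.1 p.2)
      = fun p : ℝ × ℝ => fderiv ℝ (fun p : ℝ × ℝ => u p.1 p.2) p ((1 : ℝ), (0 : ℝ)) := by
    funext p
    exact pt_eq u hu p.1 p.2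
  rw [h]
  exact (hu.fderiv_right (by simp)).clm_apply contDiff_const

lemma contDiff_px (hu : ContDiff ℝ (⊤ : ℕ∞) (fun p : ℝ × ℝ => u p.1 p.2)) :
    ContDiff ℝ (⊤ : ℕ∞) (fun p : ℝ × ℝ => px u p.1 p.2) := by
  have h : (fun p : ℝ × ℝ => px u p.1 p.2)
      = fun p : ℝ × ℝ => fderiv ℝ (fun p : ℝ × ℝ => u p.1 p.2) p ((0 : ℝ), (1 : ℝ)) := by
    funext p
    exact px_eq u hu p.1 p.2
  rw [h]
  exact (hu.fderiv_right (by simp)).clm_apply contDiff_const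

lemma mixed_symm (hu : ContDiff ℝ (⊤ : ℕ∞) (fun p : ℝ × ℝ => u p.1 p.2)) (t x : ℝ) :
    px (pt u) t x = pt (px u) t x := by
  set F : ℝ × ℝ → ℝ := fun p => u p.1 p.2 with hF
  have h1 : ∀ p : ℝ × ℝ, HasFDerivAt F (fderiv ℝ F p) p :=
    fun p => (hu.differentiable (by simp) p).hasFDerivAt
  have hfd : ContDiff ℝ (⊤ : ℕ∞) (fderiv ℝ F) := hu.fderiv_right (by simp)
  have h2 : HasFDerivAt (fderiv ℝ F) (fderiv ℝ (fderiv ℝ F) (t, x)) (t, x) :=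
    (hfd.differentiable (by simp) (t, x)).hasFDerivAt
  have hsym := second_derivative_symmetric h1 h2 ((1 : ℝ), (0 : ℝ)) ((0 : ℝ), (1 : ℝ))
  -- compute px (pt u) t x
  have e1 : (fun p : ℝ × ℝ => pt u p.1 p.2)
      = fun p : ℝ × ℝ => (ContinuousLinearMap.apply ℝ ℝ ((1 : ℝ), (0 : ℝ))) (fderiv ℝ F p) := by
    funext p; exact pt_eq u hu p.1 p.2
  have e2 : (fun p : ℝ × ℝ => px u p.1 p.2)
      = fun p : ℝ × ℝ => (ContinuousLinearMap.apply ℝ ℝ ((0 : ℝ), (1 : ℝ))) (fderiv ℝ F p) := by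
    funext p; exact px_eq u hu p.1 p.2
  have Hpt : HasFDerivAt (fun p : ℝ × ℝ => pt u p.1 p.2)
      ((ContinuousLinearMap.apply ℝ ℝ ((1 : ℝ), (0 : ℝ))).comp (fderiv ℝ (fderiv ℝ F) (t, x)))
      (t, x) := by
    rw [e1]
    exact (ContinuousLinearMap.apply ℝ ℝ ((1 : ℝ), (0 : ℝ))).hasFDerivAt.comp (t, x) h2
  have Hpx : HasFDerivAt (fun p : ℝ × ℝ => px u p.1 p.2)
      ((ContinuousLinearMap.apply ℝ ℝ ((0 : ℝ), (1 : ℝ))).comp (fderiv ℝ (fderiv ℝ F) (t, x)))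
      (t, x) := by
    rw [e2]
    exact (ContinuousLinearMap.apply ℝ ℝ ((0 : ℝ), (1 : ℝ))).hasFDerivAt.comp (t, x) h2
  have d1 : px (pt u) t x
      = fderiv ℝ (fderiv ℝ F) (t, x) ((0 : ℝ), (1 : ℝ)) ((1 : ℝ), (0 : ℝ)) := by
    have := (Hpt.comp_hasDerivAt x (HasDerivAt.prodMk (hasDerivAt_const x t) (hasDerivAt_id x))).deriv
    simpa [px, Function.comp_def] using this
  have d2 : pt (px u) t x
      = fderiv ℝ (fderiv ℝ F) (t, x) ((1 : ℝ), (0 : ℝ)) ((0 : ℝ), (1 : ℝ)) := by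
    have := (Hpx.comp_hasDerivAt t (HasDerivAt.prodMk (hasDerivAt_id t) (hasDerivAt_const t x))).deriv
    simpa [pt, Function.comp_def] using this
  rw [d1, d2, hsym]

end helpers

theorem null_form_damping_conservation
    (v α κ : ℝ → ℝ → ℝ) (c : ℝ)
    (hv : ContDiff ℝ (⊤ : ℕ∞) (fun p : ℝ × ℝ => v p.1 p.2))
    (hα : ContDiff ℝ (⊤ : ℕ∞) (fun p : ℝ × ℝ => α p.1 p.2))
    (hκ : ContDiff ℝ (⊤ : ℕ∞) (fun p : ℝ × ℝ => κ p.1 p.2))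
    (hκeq : ∀ t x,
      pt κ t x - c * px κ t x - 2 * α t x * κ t x
        - pt (fun s y => pt α s y - (α s y) ^ 2) t x
        + c * px (fun s y => c * px α s y + (α s y) ^ 2) t x = 0)
    (heq : ∀ t x,
      pt (pt v) t x - c ^ 2 * px (px v) t x
        + α t x * (pt v t x + c * px v t x) + κ t x * v t x = 0) :
    ∀ t x : ℝ,
      deriv (fun s =>
          (1 / 2) * (pt v s x - c * px v s x) ^ 2 + α s x * pt v s x * v s x
            + (1 / 2) * ((α s x) ^ 2 - pt α s x + κ s x) * (v s x) ^ 2) t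
      + deriv (fun y =>
          (c / 2) * (pt v t y - c * px v t y) ^ 2 - c ^ 2 * α t y * px v t y * v t y
            + (c / 2) * ((α t y) ^ 2 + c * px α t y - κ t y) * (v t y) ^ 2) x = 0 := by
  intro t x
  have hvt := contDiff_pt v hv
  have hvx := contDiff_px v hv
  have hat := contDiff_pt α hα
  have hax := contDiff_px α hα
  -- t-direction HasDerivAt facts
  have Hv := hasDerivAt_pt v hv t x
  have Hvt := hasDerivAt_pt (pt v) hvt t x
  have Hvx := hasDerivAt_pt (px v) hvx t x
  have Ha := hasDerivAt_pt α hα t x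
  have Hat := hasDerivAt_pt (pt α) hat t x
  have Hk := hasDerivAt_pt κ hκ t x
  -- x-direction HasDerivAt facts
  have Gv := hasDerivAt_px v hv t x
  have Gvt := hasDerivAt_px (pt v) hvt t x
  have Gvx := hasDerivAt_px (px v) hvx t x
  have Ga := hasDerivAt_px α hα t x
  have Gax := hasDerivAt_px (px α) hax t x
  have Gk := hasDerivAt_px κ hκ t x
  have H1 := ((((Hvt.sub (Hvx.const_mul c)).pow 2).const_mul (1/2)).add
      ((Ha.mul Hvt).mul Hv)).add
      (((((Ha.pow 2).sub Hat).add Hk).const_mul (1/2)).mul (Hv.pow 2))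
  have H2 := ((((Gvt.sub (Gvx.const_mul c)).pow 2).const_mul (c/2)).sub
      (((Ga.const_mul (c ^ 2)).mul Gvx).mul Gv)).add
      (((((Ga.pow 2).add (Gax.const_mul c)).sub Gk).const_mul (c/2)).mul (Gv.pow 2))
  erw [H1.deriv, H2.deriv]
  simp only [Pi.add_apply, Pi.sub_apply, Pi.mul_apply, Pi.pow_apply]
  -- expand the compatibility equation
  have e1 : pt (fun s y => pt α s y - (α s y) ^ 2) t x
      = pt (pt α) t x - (2 : ℕ) * α t x ^ (2 - 1) * pt α t x := by
    show deriv (fun s => pt α s x - (α s x) ^ 2) t = _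
    exact (Hat.sub (Ha.pow 2)).deriv
  have e2 : px (fun s y => c * px α s y + (α s y) ^ 2) t x
      = c * px (px α) t x + (2 : ℕ) * α t x ^ (2 - 1) * px α t x := by
    show deriv (fun y => c * px α t y + (α t y) ^ 2) x = _
    exact ((Gax.const_mul c).add (Ga.pow 2)).deriv
  have hκ' := hκeq t x
  rw [e1, e2] at hκ'
  have hsym := mixed_symm v hv t x
  push_cast at hκ' ⊢
  linear_combination (pt v t x - c * px v t x + α t x * v t x) * heq t x
    + (v t x ^ 2 / 2) * hκ' + (c * (pt v t x - c * px v t x)) * hsym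
end
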